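/- Causal recurrence rule: let g : ℝ^n × ℝ^m → ℝ^m be everywhere differentiable and i ∈ ℝ^m. Then the causal function rec_i(g) : (ℝ^n)^ω → (ℝ^m)^ω is causally differentiable everywhere, and for every σ, Δσ, the stream Δτ := D(rec_i(g))(σ)(Δσ) satisfies Δτ_0 = Jg(σ_0, i)(Δσ_0, 0) and Δτ_{k+1} = Jg(σ_{k+1}, τ_k)(Δσ_{k+1}, Δτ_k), where τ = rec_i(g)(σ). -/

import Mathlib

/-!
The `k`-th pointwise approximant of `rec_i(g)` is the `k`-fold unrolling
`w ↦ g (w k, g (w (k-1), … g (w 0, i)))` of the recurrence, a composite of `g` with linear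
maps; the chain rule, applied once per step of the recurrence, gives its derivative.
-/

/-- A stream function is *causal* if initial segments of length `k+1` of the
input determine initial segments of length `k+1` of the output. -/
def Causal {A B : Type*} (f : (ℕ → A) → (ℕ → B)) : Prop :=
  ∀ σ τ : ℕ → A, ∀ k : ℕ, (∀ i ≤ k, σ i = τ i) → ∀ i ≤ k, f σ i = f τ i

/-- Extend a finite word to a stream (padding with the first letter). -/
def extW {A : Type*} {k : ℕ} (w : Fin (k+1) → A) : ℕ → A :=
  fun n => if h : n < k+1 then w ⟨n, h⟩ else w 0

/-- The `k`-th pointwise approximant (unrolling) of a causal function. -/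
def U {A B : Type*} (f : (ℕ → A) → (ℕ → B)) (k : ℕ) (w : Fin (k+1) → A) : B :=
  f (extW w) k

/-- The `k`-th stringwise approximant (truncation) of a causal function. -/
def T {A B : Type*} (f : (ℕ → A) → (ℕ → B)) (k : ℕ) (w : Fin (k+1) → A) :
    Fin (k+1) → B := fun i => f (extW w) i

/-- The initial segment `σ_{0:k}` of a stream, as a finite word. -/
def init {A : Type*} (σ : ℕ → A) (k : ℕ) : Fin (k+1) → A := fun i => σ i

/-- A causal function is differentiable at a stream `σ` when all of its
pointwise approximants are differentiable at `σ_{0:k}`. -/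
def CausalDiffAt {E F : Type*} [NormedAddCommGroup E] [NormedSpace ℝ E]
    [NormedAddCommGroup F] [NormedSpace ℝ F]
    (f : (ℕ → E) → ℕ → F) (σ : ℕ → E) : Prop :=
  ∀ k, DifferentiableAt ℝ (U f k) (init σ k)

/-- `L` is the causal derivative of `f` at `σ`: the `k`-th pointwise
approximant of `L` is the Jacobian of `U_k(f)` at `σ_{0:k}`. -/
def IsCausalDerivAt {E F : Type*} [NormedAddCommGroup E] [NormedSpace ℝ E]
    [NormedAddCommGroup F] [NormedSpace ℝ F]
    (f : (ℕ → E) → ℕ → F) (σ : ℕ → E) (L : (ℕ → E) → ℕ → F) : Prop :=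
  ∀ (Δ : ℕ → E) (k : ℕ), L Δ k = fderiv ℝ (U f k) (init σ k) (init Δ k)

/-- The causal function defined by recurrence from `g` with initial value `i`. -/
def recC {n m : ℕ} (g : (Fin n → ℝ) × (Fin m → ℝ) → Fin m → ℝ)
    (i : Fin m → ℝ) (σ : ℕ → Fin n → ℝ) : ℕ → Fin m → ℝ
  | 0 => g (σ 0, i)
  | k+1 => g (σ (k+1), recC g i σ k)

def unroll {E F : Type*} (g : E × F → F) (i : F) : (k : ℕ) → (Fin (k+1) → E) → F
  | 0, w => g (w 0, i)
  | k+1, w => g (w (Fin.last (k+1)), unroll g i k (Fin.init w))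

theorem init_extW {A : Type*} {k : ℕ} (w : Fin (k+1) → A) : init (extW w) k = w := by
  funext j
  simp [init, extW, j.is_le]

section Unroll

variable {E F : Type*} [NormedAddCommGroup E] [NormedSpace ℝ E]
  [NormedAddCommGroup F] [NormedSpace ℝ F]

def Fin.initCLM (k : ℕ) : (Fin (k+1) → E) →L[ℝ] (Fin k → E) :=
  ContinuousLinearMap.pi fun j => ContinuousLinearMap.proj j.castSucc

theorem hasFDerivAt_finInit {k : ℕ} (w : Fin (k+1) → E) :
    HasFDerivAt (fun w : Fin (k+1) → E => Fin.init w) (Fin.initCLM k) w :=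
  (Fin.initCLM (E := E) k).hasFDerivAt (x := w)

variable {g : E × F → F} {i : F}

theorem hasFDerivAt_unroll_zero (hg : Differentiable ℝ g) (w : Fin 1 → E) :
    HasFDerivAt (unroll g i 0)
      ((fderiv ℝ g (w 0, i)).comp ((ContinuousLinearMap.proj 0).prod 0)) w :=
  (hg _).hasFDerivAt.comp w ((hasFDerivAt_apply 0 w).prodMk (hasFDerivAt_const i w))

theorem hasFDerivAt_unroll_succ (hg : Differentiable ℝ g) {k : ℕ} {w : Fin (k+2) → E}
    {L : (Fin (k+1) → E) →L[ℝ] F} (hL : HasFDerivAt (unroll g i k) L (Fin.init w)) :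
    HasFDerivAt (unroll g i (k+1))
      ((fderiv ℝ g (w (Fin.last (k+1)), unroll g i k (Fin.init w))).comp
        ((ContinuousLinearMap.proj (Fin.last (k+1))).prod (L.comp (Fin.initCLM (k+1))))) w :=
  (hg _).hasFDerivAt.comp w
    ((hasFDerivAt_apply _ w).prodMk (hL.comp w (hasFDerivAt_finInit w)))

theorem differentiable_unroll (hg : Differentiable ℝ g) (k : ℕ) :
    Differentiable ℝ (unroll g i k) := by
  induction k with
  | zero => exact fun w => (hasFDerivAt_unroll_zero hg w).differentiableAt
  | succ k ih =>
    exact fun w => (hasFDerivAt_unroll_succ hg (ih _).hasFDerivAt).differentiableAt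

theorem fderiv_unroll_zero (hg : Differentiable ℝ g) (w Δ : Fin 1 → E) :
    fderiv ℝ (unroll g i 0) w Δ = fderiv ℝ g (w 0, i) (Δ 0, 0) := by
  rw [(hasFDerivAt_unroll_zero hg w).fderiv]
  rfl

theorem fderiv_unroll_succ (hg : Differentiable ℝ g) (k : ℕ) (w Δ : Fin (k+2) → E) :
    fderiv ℝ (unroll g i (k+1)) w Δ =
      fderiv ℝ g (w (Fin.last (k+1)), unroll g i k (Fin.init w))
        (Δ (Fin.last (k+1)), fderiv ℝ (unroll g i k) (Fin.init w) (Fin.init Δ)) := by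
  rw [(hasFDerivAt_unroll_succ hg (differentiable_unroll hg k _).hasFDerivAt).fderiv]
  rfl

end Unroll

section Recurrence

variable {n m : ℕ} (g : (Fin n → ℝ) × (Fin m → ℝ) → Fin m → ℝ) (i : Fin m → ℝ)

theorem recC_eq_unroll_init (σ : ℕ → Fin n → ℝ) (k : ℕ) :
    recC g i σ k = unroll g i k (init σ k) := by
  induction k with
  | zero => rfl
  | succ k ih => rw [recC, ih]; rfl

theorem U_recC (k : ℕ) : U (recC g i) k = unroll g i k := by
  funext w
  rw [U, recC_eq_unroll_init, init_extW]

end Recurrence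

/-- Causal recurrence rule. -/
theorem causal_recurrence_rule {n m : ℕ}
    (g : (Fin n → ℝ) × (Fin m → ℝ) → Fin m → ℝ) (hg : Differentiable ℝ g)
    (i : Fin m → ℝ) (σ : ℕ → Fin n → ℝ) :
    CausalDiffAt (recC g i) σ ∧
    ∀ L, IsCausalDerivAt (recC g i) σ L → ∀ Δσ : ℕ → Fin n → ℝ,
      L Δσ 0 = fderiv ℝ g (σ 0, i) (Δσ 0, 0) ∧
      ∀ k : ℕ, L Δσ (k+1) =
        fderiv ℝ g (σ (k+1), recC g i σ k) (Δσ (k+1), L Δσ k) := by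
  refine ⟨fun k => U_recC g i k ▸ differentiable_unroll hg k _, fun L hL Δσ => ⟨?_, fun k => ?_⟩⟩
  · rw [hL, U_recC, fderiv_unroll_zero hg]
    rfl
  · rw [hL, hL, U_recC, U_recC, fderiv_unroll_succ hg, recC_eq_unroll_init]
    -- `Fin.init (init σ (k+1))` is `init σ k` by definition
    rfl
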